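/- Let σ* = (x*, y*) be a Nash equilibrium of the game given by U, let μ > 0, let σ^r ∈ Δ^n × Δ^m be a reference profile, and let σ̂ = (x̂, ŷ) be a saddle point of the corresponding SCCP. If σ^r ≠ σ̂ and σ̂ ≠ σ*, then ‖σ* − σ^r‖₂ − ‖σ* − σ̂‖₂ ≥ ‖σ^r − σ̂‖₂² / (‖σ* − σ^r‖₂ + ‖σ* − σ̂‖₂). -/

import Mathlib

open Finset

/-- Squared Euclidean norm of a vector. -/
noncomputable def sqnorm {k : ℕ} (v : Fin k → ℝ) : ℝ := ∑ i, (v i) ^ 2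

/-- Euclidean norm of a concatenated profile vector in ℝ^(k+l). -/
noncomputable def pnorm {k l : ℕ} (v : Fin k → ℝ) (w : Fin l → ℝ) : ℝ :=
  Real.sqrt (sqnorm v + sqnorm w)

/-- Bilinear payoff xᵀUy. -/
def payoff {k l : ℕ} (U : Matrix (Fin k) (Fin l) ℝ) (x : Fin k → ℝ) (y : Fin l → ℝ) : ℝ :=
  ∑ i, ∑ j, x i * U i j * y j

/-- Regularized SCCP objective G(x,y) = -xᵀUy + μ/2 ‖x - xʳ‖² - μ/2 ‖y - yʳ‖². -/
noncomputable def sccpObj {k l : ℕ} (U : Matrix (Fin k) (Fin l) ℝ) (μ : ℝ)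
    (xr : Fin k → ℝ) (yr : Fin l → ℝ) (x : Fin k → ℝ) (y : Fin l → ℝ) : ℝ :=
  -(payoff U x y) + μ / 2 * sqnorm (x - xr) - μ / 2 * sqnorm (y - yr)

/-- (x̂, ŷ) is a saddle point of the SCCP with weight μ and reference (xr, yr). -/
def IsSaddle {k l : ℕ} (U : Matrix (Fin k) (Fin l) ℝ) (μ : ℝ)
    (xr : Fin k → ℝ) (yr : Fin l → ℝ) (xh : Fin k → ℝ) (yh : Fin l → ℝ) : Prop :=
  xh ∈ stdSimplex ℝ (Fin k) ∧ yh ∈ stdSimplex ℝ (Fin l) ∧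
  (∀ y ∈ stdSimplex ℝ (Fin l), sccpObj U μ xr yr xh y ≤ sccpObj U μ xr yr xh yh) ∧
  (∀ x ∈ stdSimplex ℝ (Fin k), sccpObj U μ xr yr xh yh ≤ sccpObj U μ xr yr x yh)

/-- (x*, y*) is a Nash equilibrium of the zero-sum game with payoff matrix U. -/
def IsNash {k l : ℕ} (U : Matrix (Fin k) (Fin l) ℝ)
    (xs : Fin k → ℝ) (ys : Fin l → ℝ) : Prop :=
  xs ∈ stdSimplex ℝ (Fin k) ∧ ys ∈ stdSimplex ℝ (Fin l) ∧
  (∀ x ∈ stdSimplex ℝ (Fin k), payoff U x ys ≤ payoff U xs ys) ∧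
  (∀ y ∈ stdSimplex ℝ (Fin l), payoff U xs ys ≤ payoff U xs y)

/-- Exploitability ε(σ) = max_{x'} x'ᵀUy - min_{y'} xᵀUy'. -/
noncomputable def exploit {k l : ℕ} (U : Matrix (Fin k) (Fin l) ℝ)
    (x : Fin k → ℝ) (y : Fin l → ℝ) : ℝ :=
  sSup ((fun x' => payoff U x' y) '' stdSimplex ℝ (Fin k)) -
  sInf ((fun y' => payoff U x y') '' stdSimplex ℝ (Fin l))

/-- Transformed loss for the x-player: ℓ_x = -Uy + μ(x - xʳ). -/
noncomputable def lossX {k l : ℕ} (U : Matrix (Fin k) (Fin l) ℝ) (μ : ℝ)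
    (xr : Fin k → ℝ) (x : Fin k → ℝ) (y : Fin l → ℝ) : Fin k → ℝ :=
  fun i => -(∑ j, U i j * y j) + μ * (x i - xr i)

/-- Transformed loss for the y-player: ℓ_y = Uᵀx + μ(y - yʳ). -/
noncomputable def lossY {k l : ℕ} (U : Matrix (Fin k) (Fin l) ℝ) (μ : ℝ)
    (yr : Fin l → ℝ) (x : Fin k → ℝ) (y : Fin l → ℝ) : Fin l → ℝ :=
  fun j => (∑ i, U i j * x i) + μ * (y j - yr j)

/-- Immediate regret r = ⟨ℓ, p⟩·𝟏 - ℓ. -/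
noncomputable def imRegret {k : ℕ} (ℓ : Fin k → ℝ) (p : Fin k → ℝ) : Fin k → ℝ :=
  fun i => (∑ i', ℓ i' * p i') - ℓ i

/-!
For each player the saddle point minimizes a linear function plus `μ/2 ‖· - reference‖²` over
the simplex. This objective is `μ`-strongly convex, so its value at any other point of the
simplex exceeds the minimum by at least `μ/2 ‖· - saddle‖²` (a three-point inequality). Adding
the two players' inequalities at the Nash equilibrium, the payoff terms are controlled by the
Nash inequalities and leave `‖σ* - σ̂‖² + ‖σʳ - σ̂‖² ≤ ‖σ* - σʳ‖²`; the bound follows from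
`a² - b² = (a - b)(a + b)`.
-/

open Filter Topology InnerProductSpace

section UniformConvex

variable {E : Type*} [NormedAddCommGroup E] [NormedSpace ℝ E] {s : Set E} {φ : ℝ → ℝ}
  {f : E → ℝ} {a x : E}

theorem UniformConvexOn.add_le_of_isMinOn (hf : UniformConvexOn s φ f) (hmin : IsMinOn f s a)
    (ha : a ∈ s) (hx : x ∈ s) : f a + φ ‖x - a‖ ≤ f x := by
  have along_segment : ∀ t ∈ Set.Ioo (0 : ℝ) 1, f a + (1 - t) * φ ‖x - a‖ ≤ f x := by
    rintro t ⟨ht0, ht1⟩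
    have hconv := hf.2 ha hx (sub_nonneg.2 ht1.le) ht0.le (sub_add_cancel 1 t)
    have hle := hmin (hf.1 ha hx (sub_nonneg.2 ht1.le) ht0.le (sub_add_cancel 1 t))
    rw [norm_sub_rev] at hconv
    simp only [smul_eq_mul, Set.mem_ofPred_eq] at hconv hle
    nlinarith
  have hlim : Tendsto (fun t : ℝ => f a + (1 - t) * φ ‖x - a‖) (𝓝[>] 0)
      (𝓝 (f a + φ ‖x - a‖)) := by
    have hcont : Continuous (fun t : ℝ => f a + (1 - t) * φ ‖x - a‖) := by fun_prop
    simpa using (hcont.tendsto 0).mono_left nhdsWithin_le_nhds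
  exact le_of_tendsto hlim (eventually_of_mem (Ioo_mem_nhdsGT one_pos) along_segment)

end UniformConvex

theorem ConvexOn.strongConvexOn_add_sq_norm_sub {E : Type*} [NormedAddCommGroup E]
    [InnerProductSpace ℝ E] {s : Set E} {g : E → ℝ} (hg : ConvexOn ℝ s g) (m : ℝ) (r : E) :
    StrongConvexOn s m (fun z => g z + m / 2 * ‖z - r‖ ^ 2) := by
  rw [strongConvexOn_iff_convex]
  have haffine := (hg.add (((-m) • innerₛₗ ℝ r).convexOn hg.1)).add_const (m / 2 * ‖r‖ ^ 2)
  refine haffine.congr fun z _ => ?_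
  simp only [Pi.add_apply, LinearMap.smul_apply, innerₛₗ_apply_apply, smul_eq_mul,
    norm_sub_sq_real, real_inner_comm r z]
  ring

theorem sqnorm_eq_norm_sq {k : ℕ} (v : Fin k → ℝ) :
    sqnorm v = ‖(WithLp.toLp 2 v : EuclideanSpace ℝ (Fin k))‖ ^ 2 := by
  simp [sqnorm, EuclideanSpace.real_norm_sq_eq]

theorem sqnorm_nonneg {k : ℕ} (v : Fin k → ℝ) : 0 ≤ sqnorm v := by
  rw [sqnorm_eq_norm_sq]
  positivity

theorem sqnorm_sub_comm {k : ℕ} (v w : Fin k → ℝ) : sqnorm (v - w) = sqnorm (w - v) := by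
  rw [sqnorm_eq_norm_sq, sqnorm_eq_norm_sq, WithLp.toLp_sub, WithLp.toLp_sub, norm_sub_rev]

theorem IsMinOn.add_sqnorm_sub_le {k : ℕ} {s : Set (Fin k → ℝ)} {g : (Fin k → ℝ) → ℝ}
    {μ : ℝ} {r a x : Fin k → ℝ} (hg : ConvexOn ℝ s g)
    (hmin : IsMinOn (fun z => g z + μ / 2 * sqnorm (z - r)) s a) (ha : a ∈ s) (hx : x ∈ s) :
    g a + μ / 2 * sqnorm (a - r) + μ / 2 * sqnorm (x - a) ≤ g x + μ / 2 * sqnorm (x - r) := by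
  let e := (WithLp.linearEquiv 2 ℝ (Fin k → ℝ)).toLinearMap
  have hstrong := (hg.comp_linearMap e).strongConvexOn_add_sq_norm_sub μ (WithLp.toLp 2 r)
  have hmin' : IsMinOn (fun z => g (e z) + μ / 2 * ‖z - WithLp.toLp 2 r‖ ^ 2) (e ⁻¹' s)
      (WithLp.toLp 2 a) := by
    intro z hz
    simpa [e, sqnorm_eq_norm_sq] using hmin (show WithLp.ofLp z ∈ s from hz)
  have hgrowth := hstrong.add_le_of_isMinOn hmin' (show a ∈ s from ha) (show x ∈ s from hx)
  simpa [e, sqnorm_eq_norm_sq, ← WithLp.toLp_sub] using hgrowth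

theorem Real.div_sqrt_add_sqrt_le_sqrt_sub_sqrt {A B C : ℝ} (hB : 0 ≤ B) (h : B + C ≤ A) :
    C / (√A + √B) ≤ √A - √B := by
  have hA := Real.sqrt_nonneg A
  have hB' := Real.sqrt_nonneg B
  rcases (add_nonneg hA hB').eq_or_lt with hzero | hpos
  · rw [← hzero, div_zero]
    linarith
  · rw [div_le_iff₀ hpos]
    nlinarith [Real.sq_sqrt hB, Real.sq_sqrt' (x := A), le_max_left A 0]

open Matrix

section Game

variable {k l : ℕ} {U : Matrix (Fin k) (Fin l) ℝ} {μ : ℝ} {xr xh xs x : Fin k → ℝ}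
  {yr yh ys y : Fin l → ℝ}

theorem payoff_eq_dotProduct_mulVec (U : Matrix (Fin k) (Fin l) ℝ) (x : Fin k → ℝ)
    (y : Fin l → ℝ) : payoff U x y = x ⬝ᵥ (U *ᵥ y) := by
  simp only [payoff, dotProduct, mulVec, Finset.mul_sum, mul_assoc]

theorem IsSaddle.add_sqnorm_sub_le_left (hsad : IsSaddle U μ xr yr xh yh)
    (hx : x ∈ stdSimplex ℝ (Fin k)) :
    -payoff U xh yh + μ / 2 * sqnorm (xh - xr) + μ / 2 * sqnorm (x - xh) ≤
      -payoff U x yh + μ / 2 * sqnorm (x - xr) := by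
  have hconv : ConvexOn ℝ (stdSimplex ℝ (Fin k)) fun x => -payoff U x yh :=
    ((-(dotProductBilin ℝ ℝ).flip (U *ᵥ yh)).convexOn (convex_stdSimplex ℝ (Fin k))).congr
      fun z _ => by simp [payoff_eq_dotProduct_mulVec]
  refine IsMinOn.add_sqnorm_sub_le hconv (fun z hz => ?_) hsad.1 hx
  have hz_saddle := hsad.2.2.2 z hz
  simp only [sccpObj] at hz_saddle
  simp only [Set.mem_ofPred_eq]
  linarith

theorem IsSaddle.add_sqnorm_sub_le_right (hsad : IsSaddle U μ xr yr xh yh)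
    (hy : y ∈ stdSimplex ℝ (Fin l)) :
    payoff U xh yh + μ / 2 * sqnorm (yh - yr) + μ / 2 * sqnorm (y - yh) ≤
      payoff U xh y + μ / 2 * sqnorm (y - yr) := by
  have hconv : ConvexOn ℝ (stdSimplex ℝ (Fin l)) fun y => payoff U xh y :=
    ((dotProductBilin ℝ ℝ (xh ᵥ* U)).convexOn (convex_stdSimplex ℝ (Fin l))).congr
      fun z _ => by simp [payoff_eq_dotProduct_mulVec, dotProduct_mulVec]
  refine IsMinOn.add_sqnorm_sub_le hconv (fun z hz => ?_) hsad.2.1 hy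
  have hz_saddle := hsad.2.2.1 z hz
  simp only [sccpObj] at hz_saddle
  simp only [Set.mem_ofPred_eq]
  linarith

theorem IsSaddle.sqnorm_add_le (hμ : 0 < μ) (hNE : IsNash U xs ys)
    (hsad : IsSaddle U μ xr yr xh yh) :
    (sqnorm (xs - xh) + sqnorm (ys - yh)) + (sqnorm (xr - xh) + sqnorm (yr - yh)) ≤
      sqnorm (xs - xr) + sqnorm (ys - yr) := by
  have hx := hsad.add_sqnorm_sub_le_left hNE.1
  have hy := hsad.add_sqnorm_sub_le_right hNE.2.1
  have hNx := hNE.2.2.1 xh hsad.1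
  have hNy := hNE.2.2.2 yh hsad.2.1
  have hsum : μ / 2 * ((sqnorm (xs - xh) + sqnorm (ys - yh)) + (sqnorm (xr - xh) +
      sqnorm (yr - yh)) - (sqnorm (xs - xr) + sqnorm (ys - yr))) ≤ 0 := by
    rw [sqnorm_sub_comm xr, sqnorm_sub_comm yr]
    linarith
  exact sub_nonpos.1 (nonpos_of_mul_nonpos_right hsum (half_pos hμ))

end Game

theorem saddle_distance_decrease_general
    {n m : ℕ}
    (U : Matrix (Fin n) (Fin m) ℝ) (μ : ℝ) (hμ : 0 < μ)
    (xs : Fin n → ℝ) (ys : Fin m → ℝ) (hNE : IsNash U xs ys)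
    (xr : Fin n → ℝ) (yr : Fin m → ℝ)
    (xh : Fin n → ℝ) (yh : Fin m → ℝ)
    (hsad : IsSaddle U μ xr yr xh yh) :
    pnorm (xs - xr) (ys - yr) - pnorm (xs - xh) (ys - yh) ≥
      (sqnorm (xr - xh) + sqnorm (yr - yh)) /
        (pnorm (xs - xr) (ys - yr) + pnorm (xs - xh) (ys - yh)) :=
  Real.div_sqrt_add_sqrt_le_sqrt_sub_sqrt
    (add_nonneg (sqnorm_nonneg _) (sqnorm_nonneg _)) (hsad.sqnorm_add_le hμ hNE)

/-- Quantified decrease of the distance to the NE from reference to saddle point. -/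
theorem saddle_distance_decrease
    {n m : ℕ} (hn : 0 < n) (hm : 0 < m)
    (U : Matrix (Fin n) (Fin m) ℝ) (μ : ℝ) (hμ : 0 < μ)
    (xs : Fin n → ℝ) (ys : Fin m → ℝ) (hNE : IsNash U xs ys)
    (xr : Fin n → ℝ) (yr : Fin m → ℝ)
    (hxr : xr ∈ stdSimplex ℝ (Fin n)) (hyr : yr ∈ stdSimplex ℝ (Fin m))
    (xh : Fin n → ℝ) (yh : Fin m → ℝ)
    (hsad : IsSaddle U μ xr yr xh yh)
    (hne1 : ¬(xr = xh ∧ yr = yh)) (hne2 : ¬(xh = xs ∧ yh = ys)) :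
    pnorm (xs - xr) (ys - yr) - pnorm (xs - xh) (ys - yh) ≥
      (sqnorm (xr - xh) + sqnorm (yr - yh)) /
        (pnorm (xs - xr) (ys - yr) + pnorm (xs - xh) (ys - yh)) :=
  saddle_distance_decrease_general U μ hμ xs ys hNE xr yr xh yh hsad
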